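/- Failure of TA preservation in the two-level construction: let C' = {011, 022, 833, 844, 105, 550, 206, 660} ⊆ {0,...,8}^3 with groups C'₁ = {011,022}, C'₂ = {833,844}, C'₃ = {105,550}, C'₄ = {206,660}. Then C' is not a (T,2)-TA code for any T ≥ 3; specifically, for U = {011, 105, 550} we have 000 ∈ desc(U), the codeword 206 achieves the minimum Hamming distance from 000 to C', but 𝒢(206) = 4 ∉ 𝒢(U) = {1,3}. -/

import Mathlib

def desc {Q : Type*} {ℓ : ℕ} (X : Set (Fin ℓ → Q)) : Set (Fin ℓ → Q) :=
  {d | ∀ i, ∃ x ∈ X, d i = x i}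

def codeC' : Set (Fin 3 → Fin 9) :=
  {![0,1,1], ![0,2,2], ![8,3,3], ![8,4,4], ![1,0,5], ![5,5,0], ![2,0,6], ![6,6,0]}

theorem Set.ncard_le_three {α : Type*} (a b c : α) : ({a, b, c} : Set α).ncard ≤ 3 := by
  classical
  have h := Finset.card_le_three (a := a) (b := b) (c := c)
  rwa [← Set.ncard_coe_finset, Finset.coe_insert, Finset.coe_insert, Finset.coe_singleton] at h

def coalition : Set (Fin 3 → Fin 9) := {![0,1,1], ![1,0,5], ![5,5,0]}

theorem coalition_subset_codeC' : coalition ⊆ codeC' := by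
  rintro z (rfl | rfl | rfl) <;> simp [codeC']

theorem coalition_finite : coalition.Finite :=
  Set.toFinite _

theorem zero_mem_desc_coalition : ![0,0,0] ∈ desc coalition := by
  intro i
  fin_cases i
  · exact ⟨![0,1,1], by simp [coalition], rfl⟩
  · exact ⟨![1,0,5], by simp [coalition], rfl⟩
  · exact ⟨![5,5,0], by simp [coalition], rfl⟩

theorem two_le_hammingDist_zero_of_mem_codeC' {c : Fin 3 → Fin 9} (hc : c ∈ codeC') :
    2 ≤ hammingDist ![0,0,0] c := by
  rcases hc with rfl | rfl | rfl | rfl | rfl | rfl | rfl | rfl <;> decide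

theorem hammingDist_zero_206 : hammingDist (![0,0,0] : Fin 3 → Fin 9) ![2,0,6] = 2 := by
  decide

theorem twoLevel_TA_fails_general (G : (Fin 3 → Fin 9) → ℕ)
    (hG1 : G ![0,1,1] = 1)
    (hG5 : G ![1,0,5] = 3) (hG6 : G ![5,5,0] = 3)
    (hG7 : G ![2,0,6] = 4) :
    ((![0,0,0] : Fin 3 → Fin 9) ∈ desc ({![0,1,1], ![1,0,5], ![5,5,0]} : Set (Fin 3 → Fin 9))) ∧
    hammingDist (![0,0,0] : Fin 3 → Fin 9) ![2,0,6] = 2 ∧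
    (∀ c ∈ codeC', 2 ≤ hammingDist (![0,0,0] : Fin 3 → Fin 9) c) ∧
    G ![2,0,6] ∉ G '' ({![0,1,1], ![1,0,5], ![5,5,0]} : Set (Fin 3 → Fin 9)) ∧
    (∀ T : ℕ, 3 ≤ T →
      ¬ (∀ X ⊆ codeC', X.Finite → X.ncard ≤ T → ∀ x ∈ desc X,
          ∀ z ∈ codeC',
            (∀ c ∈ codeC', hammingDist x z ≤ hammingDist x c) → G z ∈ G '' X)) := by
  have hG206 : G ![2,0,6] ∉ G '' coalition := by
    rintro ⟨z, rfl | rfl | rfl, hz⟩ <;> omega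
  have h206_nearest : ∀ c ∈ codeC',
      hammingDist (![0,0,0] : Fin 3 → Fin 9) ![2,0,6] ≤ hammingDist ![0,0,0] c :=
    fun c hc ↦ by rw [hammingDist_zero_206]; exact two_le_hammingDist_zero_of_mem_codeC' hc
  refine ⟨zero_mem_desc_coalition, hammingDist_zero_206,
    fun c ↦ two_le_hammingDist_zero_of_mem_codeC', hG206, fun T hT hTA ↦ hG206 ?_⟩
  exact hTA coalition coalition_subset_codeC' coalition_finite
    ((Set.ncard_le_three _ _ _).trans hT) _ zero_mem_desc_coalition _
    (by simp [codeC']) h206_nearest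

theorem twoLevel_TA_fails (G : (Fin 3 → Fin 9) → ℕ)
    (hG1 : G ![0,1,1] = 1) (hG2 : G ![0,2,2] = 1)
    (hG3 : G ![8,3,3] = 2) (hG4 : G ![8,4,4] = 2)
    (hG5 : G ![1,0,5] = 3) (hG6 : G ![5,5,0] = 3)
    (hG7 : G ![2,0,6] = 4) (hG8 : G ![6,6,0] = 4) :
    ((![0,0,0] : Fin 3 → Fin 9) ∈ desc ({![0,1,1], ![1,0,5], ![5,5,0]} : Set (Fin 3 → Fin 9))) ∧
    hammingDist (![0,0,0] : Fin 3 → Fin 9) ![2,0,6] = 2 ∧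
    (∀ c ∈ codeC', 2 ≤ hammingDist (![0,0,0] : Fin 3 → Fin 9) c) ∧
    G ![2,0,6] ∉ G '' ({![0,1,1], ![1,0,5], ![5,5,0]} : Set (Fin 3 → Fin 9)) ∧
    (∀ T : ℕ, 3 ≤ T →
      ¬ (∀ X ⊆ codeC', X.Finite → X.ncard ≤ T → ∀ x ∈ desc X,
          ∀ z ∈ codeC',
            (∀ c ∈ codeC', hammingDist x z ≤ hammingDist x c) → G z ∈ G '' X)) :=
  twoLevel_TA_fails_general G hG1 hG5 hG6 hG7
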